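/- Let 0 ≤ a, x < p be integers and write the integer x − (p − a) in two's complement over n+1 bits (where p < 2^n). Then the sign bit of x − (p − a) equals 1 if and only if x + a < p, and in that case x + a mod p = (x + a − p) + p = x + a, while if the sign bit is 0 then x + a mod p = x + a − p. -/

import Mathlib

/-!
Put `z = x - (p - a) = (x + a) - p`, so `-2ⁿ < -p ≤ z < p < 2ⁿ`. On this range the residue of `z`
modulo `2ⁿ⁺¹` is `z + 2ⁿ⁺¹ ∈ [2ⁿ, 2ⁿ⁺¹)` when `z < 0` and `z ∈ [0, 2ⁿ)` otherwise, so bit `n`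
records exactly the sign of `z`. Since `0 ≤ x + a < 2p`, reducing `x + a` modulo `p` subtracts `p`
at most once, namely exactly when `z ≥ 0`.
-/

theorem Int.emod_eq_add_self_of_neg {a b : ℤ} (h₁ : -b ≤ a) (h₂ : a < 0) : a % b = a + b := by
  rw [← Int.add_mul_emod_self_left a b 1, mul_one]
  exact Int.emod_eq_of_lt (by omega) (by omega)

theorem Int.emod_eq_sub_self_of_le {a b : ℤ} (h₁ : b ≤ a) (h₂ : a < b + b) : a % b = a - b := by
  rw [Int.emod_eq_sub_self_emod]
  exact Int.emod_eq_of_lt (by omega) (by omega)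

theorem Int.emod_two_mul_ediv_eq_one_iff_neg {N z : ℤ} (hN : 0 < N) (hlo : -N ≤ z) (hhi : z < N) :
    z % (2 * N) / N = 1 ↔ z < 0 := by
  rw [Int.ediv_eq_iff_of_pos hN, one_mul]
  rcases lt_or_ge z 0 with hz | hz
  · have : z % (2 * N) = z + 2 * N := Int.emod_eq_add_self_of_neg (by omega) hz
    omega
  · have : z % (2 * N) = z := Int.emod_eq_of_lt hz (by omega)
    omega

/-- Correctness of Takahashi's constant modular adder: for integers
    0 ≤ a, x < p < 2ⁿ, the sign bit (bit n of the (n+1)-bit two's complement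
    representation) of x − (p − a) is 1 iff x + a < p; if it is 1 then
    (x + a) mod p = x + a, and if it is 0 then (x + a) mod p = x + a − p. -/
theorem takahashi_const_mod_adder (n : ℕ) (a x p : ℤ)
    (ha₀ : 0 ≤ a) (hx₀ : 0 ≤ x) (ha : a < p) (hx : x < p) (hp : p < 2 ^ n) :
    (((x - (p - a)) % 2 ^ (n + 1)) / 2 ^ n = 1 ↔ x + a < p) ∧
    (x + a < p → (x + a) % p = x + a) ∧
    (¬ x + a < p → (x + a) % p = x + a - p) := by
  have hsum₀ : 0 ≤ x + a := by omega
  refine ⟨?_, Int.emod_eq_of_lt hsum₀, fun h => Int.emod_eq_sub_self_of_le (by omega) (by omega)⟩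
  rw [pow_succ', Int.emod_two_mul_ediv_eq_one_iff_neg (by positivity) (by omega) (by omega)]
  omega
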